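/- Let ρ > 0, ε ∈ [0,1), ν ∈ [0,1] and m₁ ∈ ℝ. Define b(u) = (m₁u/(1−ε))·(1 + νρu/2)/(2+ρu), k(u) = ((1−ε)/2)·b(u) + m₁/(2ρ), and c(u) = −((1−ν)²/(1−ε))·(m₁²/ρ²)·[1/2 − 1/(2+ρu)] − (ν·m₁²/(ρ²(1−ε)))·[(1/2 − ν/4)·ρu + (ν/8)·ρ²u² + (ν/48)·ρ³u³]. Then c(0) = 0 and, for all u ≥ 0, c'(u) = (1−ν)·m₁·b(u) − (ρ/(1−ε))·k(u)². -/

import Mathlib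

/-- b(u) in the critical case η = 0: b(u) = (m₁u/(1−ε))·(1 + νρu/2)/(2+ρu). -/
noncomputable def bCrit (ρ ε ν m₁ : ℝ) (u : ℝ) : ℝ :=
  (m₁ * u / (1 - ε)) * (1 + ν * ρ * u / 2) / (2 + ρ * u)

/-- k(u) = ((1−ε)/2)·b(u) + m₁/(2ρ) in the critical case. -/
noncomputable def kCrit (ρ ε ν m₁ : ℝ) (u : ℝ) : ℝ :=
  ((1 - ε) / 2) * bCrit ρ ε ν m₁ u + m₁ / (2 * ρ)

/-- c(u) in the critical case η = 0. -/
noncomputable def cCrit (ρ ε ν m₁ : ℝ) (u : ℝ) : ℝ :=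
  -((1 - ν) ^ 2 / (1 - ε)) * (m₁ ^ 2 / ρ ^ 2) * (1 / 2 - 1 / (2 + ρ * u))
    - (ν * m₁ ^ 2 / (ρ ^ 2 * (1 - ε)))
        * ((1 / 2 - ν / 4) * (ρ * u) + (ν / 8) * (ρ * u) ^ 2 + (ν / 48) * (ρ * u) ^ 3)

/-!
Direct verification: `c` is a rational function of `ρu` whose only pole is at `ρu = -2`,
so away from it `c'` is computed termwise, and comparing it with
`(1 - ν) m₁ b - ρ k² / (1 - ε)` is an identity of rational functions once `ρ`, `1 - ε`
and `2 + ρu` are nonzero.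
-/

lemma cCrit_zero (ρ ε ν m₁ : ℝ) : cCrit ρ ε ν m₁ 0 = 0 := by
  simp [cCrit]

lemma hasDerivAt_half_sub_inv_two_add_mul {ρ u : ℝ} (hu : 2 + ρ * u ≠ 0) :
    HasDerivAt (fun x : ℝ => 1 / 2 - 1 / (2 + ρ * x)) (ρ / (2 + ρ * u) ^ 2) u := by
  have hlin : HasDerivAt (fun x : ℝ => 2 + ρ * x) ρ u := by
    simpa using ((hasDerivAt_id u).const_mul ρ).const_add 2
  simp only [one_div]
  exact (hlin.inv hu).const_sub _ |>.congr_deriv (by ring)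

lemma hasDerivAt_cubic_mul (a₁ a₂ a₃ ρ u : ℝ) :
    HasDerivAt (fun x : ℝ => a₁ * (ρ * x) + a₂ * (ρ * x) ^ 2 + a₃ * (ρ * x) ^ 3)
      (ρ * (a₁ + 2 * a₂ * (ρ * u) + 3 * a₃ * (ρ * u) ^ 2)) u := by
  have hx : HasDerivAt (fun x : ℝ => ρ * x) ρ u := by
    simpa using (hasDerivAt_id u).const_mul ρ
  exact (((hx.const_mul a₁).add ((hx.pow 2).const_mul a₂)).add ((hx.pow 3).const_mul a₃))
    |>.congr_deriv (by ring)

lemma hasDerivAt_cCrit (ρ ε ν m₁ : ℝ) {u : ℝ} (hu : 2 + ρ * u ≠ 0) :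
    HasDerivAt (cCrit ρ ε ν m₁)
      (-((1 - ν) ^ 2 / (1 - ε)) * (m₁ ^ 2 / ρ ^ 2) * (ρ / (2 + ρ * u) ^ 2)
        - (ν * m₁ ^ 2 / (ρ ^ 2 * (1 - ε)))
          * (ρ * ((1 / 2 - ν / 4) + 2 * (ν / 8) * (ρ * u) + 3 * (ν / 48) * (ρ * u) ^ 2))) u :=
  ((hasDerivAt_half_sub_inv_two_add_mul hu).const_mul _).sub
    ((hasDerivAt_cubic_mul _ _ _ ρ u).const_mul _)

lemma cCrit_deriv_eq (ρ ε ν m₁ u : ℝ) (hρ : ρ ≠ 0) (hε : 1 - ε ≠ 0) (hu : 2 + ρ * u ≠ 0) :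
    -((1 - ν) ^ 2 / (1 - ε)) * (m₁ ^ 2 / ρ ^ 2) * (ρ / (2 + ρ * u) ^ 2)
        - (ν * m₁ ^ 2 / (ρ ^ 2 * (1 - ε)))
          * (ρ * ((1 / 2 - ν / 4) + 2 * (ν / 8) * (ρ * u) + 3 * (ν / 48) * (ρ * u) ^ 2))
      = (1 - ν) * m₁ * bCrit ρ ε ν m₁ u - (ρ / (1 - ε)) * (kCrit ρ ε ν m₁ u) ^ 2 := by
  simp only [kCrit, bCrit]
  field_simp
  ring

theorem cCrit_ODE_general (ρ ε ν m₁ : ℝ) (hρ : 0 < ρ) (hε : ε ∈ Set.Ico (0:ℝ) 1) :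
    cCrit ρ ε ν m₁ 0 = 0 ∧
    ∀ u : ℝ, 0 ≤ u →
      HasDerivAt (cCrit ρ ε ν m₁)
        ((1 - ν) * m₁ * bCrit ρ ε ν m₁ u - (ρ / (1 - ε)) * (kCrit ρ ε ν m₁ u) ^ 2) u := by
  refine ⟨cCrit_zero ρ ε ν m₁, fun u hu => ?_⟩
  have hu' : 2 + ρ * u ≠ 0 := by positivity
  exact (hasDerivAt_cCrit ρ ε ν m₁ hu').congr_deriv
    (cCrit_deriv_eq ρ ε ν m₁ u hρ.ne' (sub_ne_zero.mpr hε.2.ne') hu')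

theorem cCrit_ODE (ρ ε ν m₁ : ℝ) (hρ : 0 < ρ) (hε : ε ∈ Set.Ico (0:ℝ) 1)
    (hν : ν ∈ Set.Icc (0:ℝ) 1) :
    cCrit ρ ε ν m₁ 0 = 0 ∧
    ∀ u : ℝ, 0 ≤ u →
      HasDerivAt (cCrit ρ ε ν m₁)
        ((1 - ν) * m₁ * bCrit ρ ε ν m₁ u - (ρ / (1 - ε)) * (kCrit ρ ε ν m₁ u) ^ 2) u :=
  cCrit_ODE_general ρ ε ν m₁ hρ hε
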